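/- The function J̃ : ℝ → ℝ defined by J̃(v) = (1/4)v² + (1/2)(1 − sgn(v)v²)² is differentiable at v = 0 with J̃′(0) = 0, yet v = 0 is not a local minimizer of J̃; in other words, 0 is a stationary point of J̃ that is not a local extremum of minimum type. -/

import Mathlib

/-! Since `sgn(v)v² = v|v|`, `J̃` is a polynomial in `v` and `v|v|`, and `v ↦ v|v|` has
derivative `0` at `0`; so the chain rule gives `J̃′(0) = 0`. But for `0 < v < 1` the
second-order term `-(3/4)v²` dominates: `J̃(v) = 1/2 - (3/4)v² + (1/2)v⁴ < 1/2 = J̃(0)`. -/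

/-- Transformed scalar objective `J̃(v) = (1/4)v² + (1/2)(1 - sgn(v)v²)²`. -/
noncomputable def Jt (v : ℝ) : ℝ :=
  1 / 4 * v ^ 2 + 1 / 2 * (1 - Real.sign v * v ^ 2) ^ 2

theorem hasDerivAt_mul_of_continuousAt {𝕜 : Type*} [NontriviallyNormedField 𝕜] {h : 𝕜 → 𝕜}
    (hh : ContinuousAt h 0) : HasDerivAt (fun x => x * h x) (h 0) 0 := by
  rw [hasDerivAt_iff_tendsto_slope]
  refine (hh.mono_left nhdsWithin_le_nhds).congr' ?_
  filter_upwards [self_mem_nhdsWithin] with x (hx : x ≠ 0)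
  simp [slope_def_field, hx]

theorem hasDerivAt_mul_abs_zero : HasDerivAt (fun x : ℝ => x * |x|) 0 0 := by
  simpa using hasDerivAt_mul_of_continuousAt (h := fun x : ℝ => |x|) continuous_abs.continuousAt

theorem Real.sign_mul_sq (v : ℝ) : Real.sign v * v ^ 2 = v * |v| := by
  rcases lt_trichotomy v 0 with hv | rfl | hv
  · rw [Real.sign_of_neg hv, abs_of_neg hv]; ring
  · simp
  · rw [Real.sign_of_pos hv, abs_of_pos hv]; ring

theorem Jt_eq (v : ℝ) : Jt v = 1 / 4 * v ^ 2 + 1 / 2 * (1 - v * |v|) ^ 2 := by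
  rw [Jt, Real.sign_mul_sq]

theorem hasDerivAt_Jt_zero : HasDerivAt Jt 0 0 := by
  have h := ((hasDerivAt_pow 2 (0 : ℝ)).const_mul (1 / 4)).fun_add
    (((hasDerivAt_mul_abs_zero.const_sub 1).fun_pow 2).const_mul (1 / 2))
  rw [show Jt = _ from funext Jt_eq]
  simpa using h

theorem Jt_lt_Jt_zero {w : ℝ} (hw0 : 0 < w) (hw1 : w < 1) : Jt w < Jt 0 := by
  have hw2 : w ^ 2 < 1 := pow_lt_one₀ hw0.le hw1 two_ne_zero
  rw [Jt_eq, Jt_eq, abs_of_pos hw0]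
  nlinarith [pow_pos hw0 2]

theorem transformed_stationary_not_local_min :
    HasDerivAt Jt 0 0 ∧
    ¬ ∃ ε > (0 : ℝ), ∀ w : ℝ, |w - 0| < ε → Jt 0 ≤ Jt w := by
  refine ⟨hasDerivAt_Jt_zero, ?_⟩
  rintro ⟨ε, hε, hmin⟩
  set w := min ε 1 / 2 with hw
  have hw0 : 0 < w := by positivity
  have hwε : w < ε := by have := min_le_left ε 1; linarith
  have hw1 : w < 1 := by have := min_le_right ε 1; linarith
  exact (hmin w (by rwa [sub_zero, abs_of_pos hw0])).not_gt (Jt_lt_Jt_zero hw0 hw1)
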